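/- arXiv:1306.3632 — 2 statements merged into one kernel-verified Lean document; each statement's English description precedes it below -/
import Mathlib

section
/- With notation as before, if all p_i have even degree, then Q equals diag(F_{q^2}^×) · ∏_i (F_{q^2}^×)^2, where F_{q^2}^× is viewed inside each F_{p_i}^× via the unique subfield F_{q^2} ⊆ F_{p_i}, diag denotes the diagonal embedding, and (F_{q^2}^×)^2 the subgroup of squares. Consequently (A/n)^×/Q is isomorphic to ∏_{i=1}^s (Z/((q^{deg p_i}−1)/(q^2−1))Z) when q is even, and to ∏_{i=1}^s (Z/(2(q^{deg p_i}−1)/(q^2−1))Z) modulo the diagonally embedded Z/2Z when q is odd. -/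
/-!
Write `q = #F`. If `x` is a root in some `K i` of `X² - tX + κ` with `t, κ ∈ F`, then so is `x ^ q`,
hence `x ^ q = x` or `x ^ q = t - x`, and in both cases `x ^ (q²) = x`: all roots lie in `E`. For a
root `r ∈ E` the other root is `κ / r = r * (w / r) ^ 2`, where `κ = w ^ 2` is a square in `E`;
so every generator of `Q` lies in `diag(Eˣ) · ∏ᵢ (Eˣ)²`. Conversely, for `u ∈ Eˣ` the pair
`u, u ^ q` is the root set of a quadratic over `F`, so `diag u ∈ Q`, and changing one coordinate
from one root to the other shows that `Q` contains `u' / u` in a single coordinate for every root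
pair `u, u'`. The pairs `(w, w ^ q)` and `(1, w ^ (q + 1))` give `w ^ (q - 1)` and `w ^ (q + 1)`,
hence `w ^ 2`, in every single coordinate.

Each `(K i)ˣ` is cyclic, so its quotient by a subgroup `H` is isomorphic to `ZMod [(K i)ˣ : H]`.
For `q` even every unit of `E` is a square and `Q` is the product of the images of `Eˣ`. For `q`
odd, `Q` is the product `N` of the images of the squares of `Eˣ` together with `diag γ` for a
generator `γ` of `Eˣ`; modulo `N`, `diag γ` is the element of order two `(mᵢ)ᵢ` of `∏ᵢ ZMod (2 mᵢ)`, where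
`mᵢ = (#(K i) - 1) / (q² - 1)`.
-/

theorem IsCyclic.eq_ker_powMonoidHom_card {G : Type*} [CommGroup G] [IsCyclic G] [Finite G]
    (H : Subgroup G) : H = (powMonoidHom (Nat.card H) : G →* G).ker := by
  refine Subgroup.eq_of_le_of_card_ge (fun x hx => ?_) ?_
  · exact congrArg Subtype.val (pow_card_eq_one' (x := (⟨x, hx⟩ : H)))
  · rw [IsCyclic.card_powMonoidHom_ker, Nat.gcd_eq_right (Subgroup.card_subgroup_dvd_card H)]

theorem IsCyclic.exists_surjective_zmod_ker_eq {G : Type*} [CommGroup G] [IsCyclic G]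
    (H : Subgroup G) :
    ∃ f : G →* Multiplicative (ZMod H.index), Function.Surjective f ∧ f.ker = H := by
  have : IsCyclic (G ⧸ H) := isCyclic_of_surjective _ (QuotientGroup.mk'_surjective H)
  let e : G ⧸ H ≃* Multiplicative (ZMod H.index) := (zmodCyclicMulEquiv this).symm
  refine ⟨(e : G ⧸ H →* _).comp (QuotientGroup.mk' H), e.surjective.comp
    (QuotientGroup.mk'_surjective H), ?_⟩
  rw [MonoidHom.ker_mulEquiv_comp, QuotientGroup.ker_mk']

theorem IsCyclic.exists_surjective_pi_zmod {I : Type*} {G : I → Type*} [∀ i, CommGroup (G i)]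
    [∀ i, IsCyclic (G i)] (H : ∀ i, Subgroup (G i)) {k : I → ℕ} (hk : ∀ i, (H i).index = k i) :
    ∃ Φ : (∀ i, G i) →* Multiplicative (∀ i, ZMod (k i)), Function.Surjective Φ ∧
      Φ.ker = Subgroup.pi Set.univ H ∧ ∀ a i, (Φ a).toAdd i = 0 ↔ a i ∈ H i := by
  obtain rfl : (fun i => (H i).index) = k := funext hk
  choose f hf hker using fun i => exists_surjective_zmod_ker_eq (H i)
  let e := (MulEquiv.piMultiplicative fun i => ZMod (H i).index).symm
  have hcomp : ∀ a i, (e (MonoidHom.piMap f a)).toAdd i = 0 ↔ a i ∈ H i := fun a i => by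
    change f i (a i) = 1 ↔ _
    rw [← MonoidHom.mem_ker, hker]
  refine ⟨(e : _ →* _).comp (MonoidHom.piMap f), e.surjective.comp (.piMap hf), ?_, hcomp⟩
  ext a
  simp only [MonoidHom.mem_ker, MonoidHom.comp_apply, Subgroup.mem_pi, Set.mem_univ,
    true_implies, ← hcomp]
  exact funext_iff

theorem ZMod.eq_natCast_of_add_self_eq_zero {m : ℕ} {z : ZMod (2 * m)} (hz : z ≠ 0)
    (h : z + z = 0) : z = m := by
  rcases Nat.eq_zero_or_pos m with rfl | hm
  · exact absurd (by simpa using h) hz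
  have : NeZero (2 * m) := ⟨by omega⟩
  have hval := ((ZMod.neg_eq_self_iff z).1 (neg_eq_of_add_eq_zero_left h)).resolve_left hz
  rw [← ZMod.natCast_zmod_val z, show z.val = m by omega]

theorem ker_toMultiplicative_mk'_closure_singleton {A : Type*} [AddCommGroup A] (v : A) :
    (AddMonoidHom.toMultiplicative (QuotientAddGroup.mk' (AddSubgroup.closure {v}))).ker =
      Subgroup.zpowers (Multiplicative.ofAdd v) := by
  ext x
  rw [MonoidHom.mem_ker, ← AddSubgroup.zmultiples_eq_closure]
  change (x.toAdd : A ⧸ AddSubgroup.zmultiples v) = 0 ↔ _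
  rw [QuotientAddGroup.eq_zero_iff, AddSubgroup.mem_zmultiples_iff, Subgroup.mem_zpowers_iff]
  rfl

theorem range_unitsMap_eq_ker {A B : Type*} [Field A] [Fintype A] [Field B] [Fintype B]
    (f : A →+* B) :
    (Units.map f.toMonoidHom).range = (powMonoidHom (Fintype.card A - 1) : Bˣ →* Bˣ).ker := by
  rw [IsCyclic.eq_ker_powMonoidHom_card (Units.map f.toMonoidHom).range,
    ← Nat.card_congr (MonoidHom.ofInjective (Units.map_injective f.injective)).toEquiv,
    Nat.card_units, Nat.card_eq_fintype_card]

theorem mem_range_unitsMap_of_pow_card_eq {A B : Type*} [Field A] [Fintype A] [Field B]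
    [Fintype B] (f : A →+* B) {x : Bˣ} (hx : (x : B) ^ Fintype.card A = x) :
    x ∈ (Units.map f.toMonoidHom).range := by
  rw [range_unitsMap_eq_ker, MonoidHom.mem_ker, powMonoidHom_apply, ← mul_left_inj x,
    ← pow_succ, Nat.sub_add_cancel Fintype.card_pos, one_mul]
  exact Units.ext (by rwa [Units.val_pow_eq_pow_val])

theorem exists_eq_of_pow_card_eq {A B : Type*} [Field A] [Fintype A] [Field B] [Fintype B]
    (f : A →+* B) {y : B} (hy : y ^ Fintype.card A = y) : ∃ x, f x = y := by
  rcases eq_or_ne y 0 with rfl | hy0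
  · exact ⟨0, map_zero f⟩
  obtain ⟨u, hu⟩ := mem_range_unitsMap_of_pow_card_eq f (x := Units.mk0 y hy0) hy
  exact ⟨u, congrArg Units.val hu⟩

theorem index_map_unitsMap {A B : Type*} [Field A] [Field B] [Fintype B] (f : A →+* B)
    (S : Subgroup Aˣ) [Finite S] :
    (S.map (Units.map f.toMonoidHom)).index = (Fintype.card B - 1) / Nat.card S := by
  have h := (S.map (Units.map f.toMonoidHom)).card_mul_index
  rw [Subgroup.card_map_of_injective (Units.map_injective f.injective), Nat.card_units,
    Nat.card_eq_fintype_card (α := B)] at h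
  rw [← h, Nat.mul_div_cancel_left _ Nat.card_pos]

theorem IsCyclic.not_mem_range_powMonoidHom_two {G : Type*} [CommGroup G] [IsCyclic G]
    [Finite G] (hG : Even (Nat.card G)) {γ : G} (hγ : Subgroup.zpowers γ = ⊤) :
    γ ∉ (powMonoidHom 2 : G →* G).range := fun h => by
  have htop : (powMonoidHom 2 : G →* G).range = ⊤ :=
    top_le_iff.1 (hγ ▸ Subgroup.zpowers_le.2 h)
  have hcard := IsCyclic.card_powMonoidHom_range G 2
  rw [htop, Subgroup.card_top,
    Nat.gcd_eq_right hG.two_dvd] at hcard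
  have := Nat.card_pos (α := G)
  omega

theorem index_map_squares {A B : Type*} [Field A] [Fintype A] [Field B] [Fintype B]
    (f : A →+* B) (hA : Odd (Fintype.card A)) :
    ((powMonoidHom 2 : Aˣ →* Aˣ).range.map (Units.map f.toMonoidHom)).index =
      2 * ((Fintype.card B - 1) / (Fintype.card A - 1)) := by
  have hcardA : Nat.card Aˣ = Fintype.card A - 1 := by
    rw [Nat.card_units, Nat.card_eq_fintype_card]
  obtain ⟨e, he⟩ : 2 ∣ Fintype.card A - 1 := (Nat.Odd.sub_odd hA odd_one).two_dvd
  obtain ⟨c, hc⟩ : Fintype.card A - 1 ∣ Fintype.card B - 1 := by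
    simpa [hcardA, Nat.card_units, Nat.card_eq_fintype_card] using
      Subgroup.card_dvd_of_injective _ (Units.map_injective f.injective)
  have he0 : 0 < e := by have := Fintype.one_lt_card (α := A); omega
  rw [index_map_unitsMap, IsCyclic.card_powMonoidHom_range, hcardA, Nat.gcd_eq_right ⟨e, he⟩, hc,
    he, Nat.mul_div_cancel_left _ two_pos, Nat.div_eq_of_eq_mul_left he0 (by ring :
      2 * e * c = 2 * c * e), Nat.div_eq_of_eq_mul_left (by omega) (by ring :
      2 * e * c = c * (2 * e))]

section Frobenius

variable {F : Type*} [Field F] [Fintype F]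

noncomputable def powCardHom {R : Type*} [CommRing R] (f : F →+* R) : R →+* R :=
  letI := f.toAlgebra
  (FiniteField.frobeniusAlgHom F R).toRingHom

theorem powCardHom_apply {R : Type*} [CommRing R] (f : F →+* R) (x : R) :
    powCardHom f x = x ^ Fintype.card F := rfl

theorem powCardHom_apply_self {R : Type*} [CommRing R] (f : F →+* R) (c : F) :
    powCardHom f (f c) = f c := by
  rw [powCardHom_apply, ← map_pow, FiniteField.pow_card]

theorem pow_card_sq_eq_of_quadratic {L : Type*} [Field L] (f : F →+* L) {t κ : F} {y : L}
    (hy : y ^ 2 - f t * y + f κ = 0) : y ^ (Fintype.card F ^ 2) = y := by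
  set φ := powCardHom f
  have hfix : ∀ c, φ (f c) = f c := powCardHom_apply_self f
  have hφy : φ y ^ 2 - f t * φ y + f κ = 0 := by
    simpa only [map_add, map_sub, map_mul, map_pow, hfix, map_zero] using congrArg φ hy
  have hφφ : φ (φ y) = y := by
    rcases mul_eq_zero.1 (by linear_combination hφy - hy :
      (φ y - y) * (φ y - (f t - y)) = 0) with h | h
    · rw [sub_eq_zero.1 h, sub_eq_zero.1 h]
    · rw [sub_eq_zero.1 h, map_sub, hfix, sub_eq_zero.1 h, sub_sub_cancel]
  rwa [sq, pow_mul, ← powCardHom_apply, ← powCardHom_apply]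

theorem isSquare_map_of_card_eq_sq {E : Type*} [Field E] [Fintype E] (ι : F →+* E)
    (hE : Fintype.card E = Fintype.card F ^ 2) (x : F) : IsSquare (ι x) := by
  by_cases hE2 : ringChar E = 2
  · exact FiniteField.isSquare_of_char_two hE2 _
  rcases eq_or_ne x 0 with rfl | hx
  · exact ⟨0, by simp⟩
  rw [FiniteField.isSquare_iff hE2 ((map_ne_zero ι).2 hx), hE]
  obtain ⟨k, hk⟩ : Odd (Fintype.card F) := by
    have := FiniteField.odd_card_of_char_ne_two hE2
    rw [hE] at this
    exact (Nat.odd_pow_iff two_ne_zero).1 (Nat.odd_iff.2 this)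
  have hexp : Fintype.card F ^ 2 / 2 = (Fintype.card F - 1) * (k + 1) := by
    rw [hk, Nat.add_sub_cancel, show (2 * k + 1) ^ 2 = 2 * (2 * k * (k + 1)) + 1 by ring]
    omega
  rw [hexp, pow_mul, ← map_pow, FiniteField.pow_card_sub_one_eq_one x hx, map_one, one_pow]

theorem pow_card_fixes_trace_and_norm {E : Type*} [Field E] [Fintype E] (ι : F →+* E)
    (hE : Fintype.card E = Fintype.card F ^ 2) (w : E) :
    (w + w ^ Fintype.card F) ^ Fintype.card F = w + w ^ Fintype.card F ∧
      (w * w ^ Fintype.card F) ^ Fintype.card F = w * w ^ Fintype.card F := by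
  have hφφ : powCardHom ι (powCardHom ι w) = w := by
    rw [powCardHom_apply, powCardHom_apply, ← pow_mul, ← sq, ← hE, FiniteField.pow_card]
  simp only [← powCardHom_apply ι, map_add, map_mul, hφφ]
  exact ⟨add_comm _ _, mul_comm _ _⟩

end Frobenius

section QuadraticRoots

variable {F E : Type*} [Field F] [Field E] (ι : F →+* E)
  {I : Type*} {K : I → Type*} [∀ i, Field (K i)] (g : ∀ i, E →+* K i)

def quadraticRootSet : Set (∀ i, (K i)ˣ) :=
  {a | ∃ t κ : F, κ ≠ 0 ∧ ∀ i, (a i : K i) ^ 2 - g i (ι t) * (a i : K i) + g i (ι κ) = 0}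

def unitsDiag : Eˣ →* ∀ i, (K i)ˣ :=
  MonoidHom.pi fun i => Units.map (g i).toMonoidHom

def squaresPi : Subgroup (∀ i, (K i)ˣ) :=
  Subgroup.pi Set.univ fun i =>
    (powMonoidHom 2 : Eˣ →* Eˣ).range.map (Units.map (g i).toMonoidHom)

theorem mem_unitsDiag_range_sup_squaresPi {a : ∀ i, (K i)ˣ} :
    a ∈ (unitsDiag g).range ⊔ squaresPi g ↔
      ∃ α : Eˣ, ∃ β : I → Eˣ, ∀ i, a i = Units.map (g i).toMonoidHom (α * β i ^ 2) := by
  simp only [Subgroup.mem_sup, MonoidHom.mem_range, squaresPi, Subgroup.mem_pi, Set.mem_univ,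
    true_implies, Subgroup.mem_map, MonoidHom.mem_range, powMonoidHom_apply]
  constructor
  · rintro ⟨_, ⟨α, rfl⟩, z, hz, rfl⟩
    have hz' : ∀ i, ∃ b : Eˣ, Units.map (g i).toMonoidHom (b ^ 2) = z i := fun i => by
      obtain ⟨_, ⟨b, rfl⟩, h⟩ := hz i
      exact ⟨b, h⟩
    choose β hβ using hz'
    exact ⟨α, β, fun i => by simp [unitsDiag, ← hβ]⟩
  · rintro ⟨α, β, ha⟩
    exact ⟨_, ⟨α, rfl⟩, _, fun i => ⟨_, ⟨β i, rfl⟩, rfl⟩, funext fun i => by simp [unitsDiag, ha]⟩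

theorem mem_quadraticRootSet_of_roots [Fintype F] [Fintype E] {u u' : Eˣ}
    (hsum : ((u : E) + u') ^ Fintype.card F = u + u')
    (hprod : ((u : E) * u') ^ Fintype.card F = u * u')
    {ε : I → Eˣ} (hε : ∀ i, ε i = u ∨ ε i = u') :
    (fun i => Units.map (g i).toMonoidHom (ε i)) ∈ quadraticRootSet ι g := by
  obtain ⟨t, ht⟩ := exists_eq_of_pow_card_eq ι hsum
  obtain ⟨κ, hκ⟩ := exists_eq_of_pow_card_eq ι hprod
  refine ⟨t, κ, fun h => by simp [h] at hκ, fun i => ?_⟩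
  have hroot : ((ε i : E) - u) * (ε i - u') = 0 := by rcases hε i with h | h <;> simp [h]
  simp only [Units.coe_map, RingHom.toMonoidHom_eq_coe, MonoidHom.coe_coe, ht, hκ]
  rw [← map_pow, ← map_mul, ← map_sub, ← map_add, ← map_zero (g i)]
  congr 1
  linear_combination hroot

theorem unitsDiag_mem_closure [Fintype F] [Fintype E]
    (hE : Fintype.card E = Fintype.card F ^ 2) (u : Eˣ) :
    unitsDiag g u ∈ Subgroup.closure (quadraticRootSet ι g) := by
  obtain ⟨hsum, hprod⟩ := pow_card_fixes_trace_and_norm ι hE (u : E)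
  rw [← Units.val_pow_eq_pow_val] at hsum hprod
  exact Subgroup.subset_closure
    (mem_quadraticRootSet_of_roots ι g hsum hprod (ε := fun _ => u) fun _ => .inl rfl)

theorem mulSingle_mem_closure [Fintype F] [Fintype E] [DecidableEq I] (i : I) {u u' : Eˣ}
    (hsum : ((u : E) + u') ^ Fintype.card F = u + u')
    (hprod : ((u : E) * u') ^ Fintype.card F = u * u') :
    Pi.mulSingle i (Units.map (g i).toMonoidHom (u' * u⁻¹)) ∈
      Subgroup.closure (quadraticRootSet ι g) := by
  have hmixed := mem_quadraticRootSet_of_roots ι g hsum hprod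
    (ε := Function.update (fun _ => u) i u') fun j => by
      rcases eq_or_ne j i with rfl | h <;> simp [*]
  have hdiag := mem_quadraticRootSet_of_roots ι g hsum hprod (ε := fun _ => u) fun _ => .inl rfl
  convert mul_mem (Subgroup.subset_closure hmixed) (inv_mem (Subgroup.subset_closure hdiag))
    using 1
  funext j
  rcases eq_or_ne j i with rfl | h <;> simp [*]

theorem mulSingle_sq_mem_closure [Fintype F] [Fintype E] [DecidableEq I]
    (hE : Fintype.card E = Fintype.card F ^ 2) (i : I) (w : Eˣ) :
    Pi.mulSingle i (Units.map (g i).toMonoidHom (w ^ 2)) ∈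
      Subgroup.closure (quadraticRootSet ι g) := by
  obtain ⟨hsum, hprod⟩ := pow_card_fixes_trace_and_norm ι hE (w : E)
  have hsum' : ((1 : Eˣ) + ((w * w ^ Fintype.card F : Eˣ) : E)) ^ Fintype.card F =
      (1 : Eˣ) + ((w * w ^ Fintype.card F : Eˣ) : E) := by
    push_cast
    rw [← powCardHom_apply ι, map_add, map_one, powCardHom_apply, hprod]
  have hprod' : (((1 : Eˣ) : E) * ((w * w ^ Fintype.card F : Eˣ) : E)) ^ Fintype.card F =
      (1 : Eˣ) * ((w * w ^ Fintype.card F : Eˣ) : E) := by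
    push_cast
    rw [one_mul, hprod]
  rw [← Units.val_pow_eq_pow_val] at hsum hprod
  convert mul_mem (mulSingle_mem_closure ι g i hsum' hprod')
    (inv_mem (mulSingle_mem_closure ι g i hsum hprod)) using 1
  rw [← Pi.mulSingle_inv, ← Pi.mulSingle_mul, ← map_inv, ← map_mul]
  congr 2
  group

theorem quadraticRootSet_subset [Fintype F] [Fintype E] [∀ i, Fintype (K i)]
    (hE : Fintype.card E = Fintype.card F ^ 2) :
    quadraticRootSet ι g ⊆ ((unitsDiag g).range ⊔ squaresPi g : Subgroup (∀ i, (K i)ˣ)) := by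
  classical
  rintro a ⟨t, κ, hκ, ha⟩
  rw [SetLike.mem_coe, mem_unitsDiag_range_sup_squaresPi]
  have hlift : ∀ i, a i ∈ (Units.map (g i).toMonoidHom).range := fun i => by
    refine mem_range_unitsMap_of_pow_card_eq (g i) ?_
    rw [hE]
    exact pow_card_sq_eq_of_quadratic ((g i).comp ι) (ha i)
  choose ε hε using hlift
  have hroot : ∀ i, (ε i : E) ^ 2 - ι t * ε i + ι κ = 0 := fun i =>
    (g i).injective (by simpa [← hε i] using ha i)
  rcases isEmpty_or_nonempty I with hI | ⟨⟨i₀⟩⟩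
  · exact ⟨1, 1, isEmptyElim⟩
  obtain ⟨w, hw⟩ := isSquare_map_of_card_eq_sq ι hE κ
  have hw0 : w ≠ 0 := by
    rintro rfl
    exact hκ (by simpa using hw)
  refine ⟨ε i₀, fun i => if ε i = ε i₀ then 1 else Units.mk0 w hw0 * (ε i₀)⁻¹, fun i => ?_⟩
  rw [← hε i]
  congr 1
  dsimp only
  split_ifs with h
  · simp [h]
  have hother : (ε i : E) = ι t - ε i₀ := by
    have hne : (ε i : E) - ε i₀ ≠ 0 := sub_ne_zero.2 fun h' => h (Units.ext h')
    exact sub_eq_zero.1 <| (mul_eq_zero.1 (by linear_combination hroot i - hroot i₀ :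
      ((ε i : E) - ε i₀) * (ε i - (ι t - ε i₀)) = 0)).resolve_left hne
  ext
  push_cast [Units.val_mk0]
  field_simp
  linear_combination hother * ε i₀ - hroot i₀ + hw

theorem closure_quadraticRootSet [Fintype F] [Fintype E] [∀ i, Fintype (K i)] [Finite I]
    [DecidableEq I] (hE : Fintype.card E = Fintype.card F ^ 2) :
    Subgroup.closure (quadraticRootSet ι g) = (unitsDiag g).range ⊔ squaresPi g := by
  refine le_antisymm ((Subgroup.closure_le _).2 (quadraticRootSet_subset ι g hE)) (sup_le ?_ ?_)
  · rintro _ ⟨u, rfl⟩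
    exact unitsDiag_mem_closure ι g hE u
  · refine Subgroup.pi_le_iff.2 fun i => ?_
    rintro _ ⟨_, ⟨_, ⟨w, rfl⟩, rfl⟩, rfl⟩
    exact mulSingle_sq_mem_closure ι g hE i w

end QuadraticRoots

section Quotient

variable {F E : Type*} [Fintype F] [Field E] [Fintype E]
  {I : Type*} {K : I → Type*} [∀ i, Field (K i)] [∀ i, Fintype (K i)]
  (g : ∀ i, E →+* K i)

theorem nonempty_quotient_mulEquiv_of_even [Field F] (hE : Fintype.card E = Fintype.card F ^ 2)
    (hq : Even (Fintype.card F)) :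
    Nonempty ((∀ i, (K i)ˣ) ⧸ ((unitsDiag g).range ⊔ squaresPi g) ≃*
      Multiplicative (∀ i, ZMod ((Fintype.card (K i) - 1) / (Fintype.card F ^ 2 - 1)))) := by
  have hcardE : Nat.card Eˣ = Fintype.card F ^ 2 - 1 := by
    rw [Nat.card_units, Nat.card_eq_fintype_card, hE]
  have hsq : (powMonoidHom 2 : Eˣ →* Eˣ).range = ⊤ := by
    refine Subgroup.eq_top_of_card_eq _ ?_
    rw [IsCyclic.card_powMonoidHom_range, hcardE, Nat.Coprime.gcd_eq_one, Nat.div_one]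
    exact Nat.coprime_two_right.2 <|
      Nat.Even.sub_odd (Nat.one_le_pow _ _ Fintype.card_pos) (hq.pow_of_ne_zero two_ne_zero) odd_one
  obtain ⟨Φ, hΦ, hker, -⟩ := IsCyclic.exists_surjective_pi_zmod
    (fun i => (⊤ : Subgroup Eˣ).map (Units.map (g i).toMonoidHom))
    (k := fun i => (Fintype.card (K i) - 1) / (Fintype.card F ^ 2 - 1))
    fun i => by rw [index_map_unitsMap, Subgroup.card_top, hcardE]
  have hQ : (unitsDiag g).range ⊔ squaresPi g = Φ.ker := by
    rw [hker, squaresPi, hsq, sup_eq_right]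
    rintro _ ⟨u, rfl⟩
    exact (Subgroup.mem_pi _).2 fun i _ => ⟨u, trivial, rfl⟩
  exact ⟨(QuotientGroup.quotientMulEquivOfEq hQ).trans
    (QuotientGroup.quotientKerEquivOfSurjective Φ hΦ)⟩

theorem nonempty_quotient_mulEquiv_of_odd (hE : Fintype.card E = Fintype.card F ^ 2)
    (hq : Odd (Fintype.card F)) :
    Nonempty ((∀ i, (K i)ˣ) ⧸ ((unitsDiag g).range ⊔ squaresPi g) ≃*
      Multiplicative
        ((∀ i, ZMod (2 * ((Fintype.card (K i) - 1) / (Fintype.card F ^ 2 - 1)))) ⧸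
          AddSubgroup.closure {fun i =>
            (((Fintype.card (K i) - 1) / (Fintype.card F ^ 2 - 1) : ℕ) :
              ZMod (2 * ((Fintype.card (K i) - 1) / (Fintype.card F ^ 2 - 1))))})) := by
  set m : I → ℕ := fun i => (Fintype.card (K i) - 1) / (Fintype.card F ^ 2 - 1)
  have hoddE : Odd (Fintype.card E) := hE ▸ hq.pow
  obtain ⟨Φ, hΦ, hker, hcomp⟩ := IsCyclic.exists_surjective_pi_zmod
    (fun i => (powMonoidHom 2 : Eˣ →* Eˣ).range.map (Units.map (g i).toMonoidHom))
    (k := fun i => 2 * m i) fun i => by rw [index_map_squares _ hoddE, hE]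
  obtain ⟨γ, hγ⟩ := isCyclic_iff_exists_zpowers_eq_top.1 (inferInstance : IsCyclic Eˣ)
  have hγ_not_sq := IsCyclic.not_mem_range_powMonoidHom_two (by
    rw [Nat.card_units, Nat.card_eq_fintype_card]
    exact Nat.Odd.sub_odd hoddE odd_one) hγ
  have hΦγ : Φ (unitsDiag g γ) = Multiplicative.ofAdd fun i => (m i : ZMod (2 * m i)) := by
    refine Multiplicative.toAdd.injective (funext fun i => ?_)
    refine ZMod.eq_natCast_of_add_self_eq_zero ?_ ?_
    · rw [Ne, hcomp]
      rintro ⟨w, hw, hwγ⟩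
      exact hγ_not_sq (Units.map_injective (g i).injective hwγ ▸ hw)
    · rw [← Pi.add_apply, ← toAdd_mul, ← map_mul, hcomp]
      exact ⟨γ * γ, ⟨γ, sq γ⟩, map_mul _ γ γ⟩
  let Ψ := (AddMonoidHom.toMultiplicative (QuotientAddGroup.mk' (AddSubgroup.closure
    {fun i => (m i : ZMod (2 * m i))}))).comp Φ
  have hΨ : Function.Surjective Ψ := (QuotientAddGroup.mk'_surjective _).comp hΦ
  have hQ : (unitsDiag g).range ⊔ squaresPi g = Ψ.ker := by
    rw [← MonoidHom.comap_ker, ker_toMultiplicative_mk'_closure_singleton, ← hΦγ,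
      ← MonoidHom.map_zpowers, ← MonoidHom.map_zpowers, hγ, ← MonoidHom.range_eq_map,
      Subgroup.comap_map_eq, hker]
    rfl
  exact ⟨(QuotientGroup.quotientMulEquivOfEq hQ).trans
    (QuotientGroup.quotientKerEquivOfSurjective Ψ hΨ)⟩

end Quotient

theorem stmt_4_general (F E : Type*) [Field F] [Fintype F] [Field E] [Fintype E]
    (ι : F →+* E) (hE : Fintype.card E = Fintype.card F ^ 2)
    (s : ℕ)
    (K : Fin s → Type*) [∀ i, Field (K i)] [∀ i, Fintype (K i)]
    (g : ∀ i, E →+* K i)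
    (Q : Subgroup (∀ i, (K i)ˣ))
    (hQ : Q = Subgroup.closure {a : ∀ i, (K i)ˣ |
      ∃ t κ : F, κ ≠ 0 ∧ ∀ i,
        (a i : K i) ^ 2 - g i (ι t) * (a i : K i) + g i (ι κ) = 0}) :
    ((Q : Set (∀ i, (K i)ˣ)) =
      {a : ∀ i, (K i)ˣ | ∃ α : Eˣ, ∃ β : Fin s → Eˣ, ∀ i,
        a i = Units.map (g i).toMonoidHom (α * (β i) ^ 2)}) ∧
    (Even (Fintype.card F) →
      Nonempty ((∀ i, (K i)ˣ) ⧸ Q ≃*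
        Multiplicative (∀ i, ZMod ((Fintype.card (K i) - 1) / (Fintype.card F ^ 2 - 1))))) ∧
    (Odd (Fintype.card F) →
      Nonempty ((∀ i, (K i)ˣ) ⧸ Q ≃*
        Multiplicative
          ((∀ i, ZMod (2 * ((Fintype.card (K i) - 1) / (Fintype.card F ^ 2 - 1)))) ⧸
            AddSubgroup.closure {fun i =>
              (((Fintype.card (K i) - 1) / (Fintype.card F ^ 2 - 1) : ℕ) :
                ZMod (2 * ((Fintype.card (K i) - 1) / (Fintype.card F ^ 2 - 1))))}))) := by
  obtain rfl : Q = (unitsDiag g).range ⊔ squaresPi g :=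
    hQ.trans (closure_quadraticRootSet ι g hE)
  refine ⟨Set.ext fun a => mem_unitsDiag_range_sup_squaresPi g,
    nonempty_quotient_mulEquiv_of_even g hE, nonempty_quotient_mulEquiv_of_odd g hE⟩

/-- Product-of-residue-fields (CRT) model of the even-degree case.  `F = 𝔽_q`,
`E = 𝔽_{q²}` a quadratic extension, and `K i = 𝔽_{p_i}` the residue fields, each
containing `E` (this is exactly the condition that all `deg pᵢ` are even).
`Q` is the subgroup of `∏ᵢ (K i)ˣ` generated by the simultaneous roots of
quadratics `x² - t x + κ` with `t ∈ F`, `κ ∈ Fˣ`.  Then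
`Q = diag(Eˣ) · ∏ᵢ (Eˣ)²`, and the quotient `(∏ᵢ (K i)ˣ)/Q` is isomorphic to
`∏ᵢ ℤ/((|K i|−1)/(q²−1))` for even `q`, and to
`(∏ᵢ ℤ/(2(|K i|−1)/(q²−1)))/diag(ℤ/2)` for odd `q`. -/
theorem stmt_4 (F E : Type*) [Field F] [Fintype F] [Field E] [Fintype E]
    (ι : F →+* E) (hE : Fintype.card E = Fintype.card F ^ 2)
    (s : ℕ) (hs : 0 < s)
    (K : Fin s → Type*) [∀ i, Field (K i)] [∀ i, Fintype (K i)]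
    (g : ∀ i, E →+* K i)
    (Q : Subgroup (∀ i, (K i)ˣ))
    (hQ : Q = Subgroup.closure {a : ∀ i, (K i)ˣ |
      ∃ t κ : F, κ ≠ 0 ∧ ∀ i,
        (a i : K i) ^ 2 - g i (ι t) * (a i : K i) + g i (ι κ) = 0}) :
    ((Q : Set (∀ i, (K i)ˣ)) =
      {a : ∀ i, (K i)ˣ | ∃ α : Eˣ, ∃ β : Fin s → Eˣ, ∀ i,
        a i = Units.map (g i).toMonoidHom (α * (β i) ^ 2)}) ∧
    (Even (Fintype.card F) →
      Nonempty ((∀ i, (K i)ˣ) ⧸ Q ≃*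
        Multiplicative (∀ i, ZMod ((Fintype.card (K i) - 1) / (Fintype.card F ^ 2 - 1))))) ∧
    (Odd (Fintype.card F) →
      Nonempty ((∀ i, (K i)ˣ) ⧸ Q ≃*
        Multiplicative
          ((∀ i, ZMod (2 * ((Fintype.card (K i) - 1) / (Fintype.card F ^ 2 - 1)))) ⧸
            AddSubgroup.closure {fun i =>
              (((Fintype.card (K i) - 1) / (Fintype.card F ^ 2 - 1) : ℕ) :
                ZMod (2 * ((Fintype.card (K i) - 1) / (Fintype.card F ^ 2 - 1))))}))) :=
  stmt_4_general F E ι hE s K g Q hQ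
end

section
/- Let q be a prime power and consider the free abelian group on generators ψ_1, …, ψ_q modulo the relations (q+2)ψ_q − ψ_{q−1} = 0, −ψ_{i+1} + 2ψ_i − ψ_{i−1} = 0 for 2 ≤ i ≤ q−1, and −ψ_2 + (q+2)ψ_1 = 0. This quotient group is cyclic of order (q^2+1)(q+1), generated by the image of ψ_1. -/
/-!
Index the generators from `0`, so `ψ₁` is `e₀`, and put `a j = 1 + j (q + 1)` (`psiCoeff`).
Explicit integer vectors witness the needed relations: `M w = e_j - a_j e₀` for the piecewise
linear `w i = min i j - j`, so `ψ_{j+1} = a_j ψ₁` and `ψ₁` generates; and `M b = N e₀` for the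
reflected vector `b i = a (q - 1 - i)`, so `N ψ₁ = 0` with `N = (q² + 1)(q + 1)`. Conversely
`M a = N e_{q-1}` and `M` is symmetric, so `v ↦ a ⬝ᵥ v` maps the column span of `M` into `N ℤ`
while sending `e₀` to `1`; hence `ψ₁` has order exactly `N`.
-/

open Matrix

namespace Submodule.Quotient

theorem mk_eq_dotProduct_smul {R ι : Type*} [Ring R] [Fintype ι]
    [DecidableEq ι] {p : Submodule R (ι → R)} {a : ι → R} {g : (ι → R) ⧸ p}
    (h : ∀ i, mk (Pi.single i 1) = a i • g) (y : ι → R) : mk y = (y ⬝ᵥ a) • g := by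
  conv_lhs => rw [← Finset.univ_sum_single y]
  simp only [← Submodule.mkQ_apply, map_sum, dotProduct, Finset.sum_smul, mul_smul]
  refine Finset.sum_congr rfl fun i _ => ?_
  rw [Submodule.mkQ_apply, ← h, ← mk_smul, ← Pi.single_smul', smul_eq_mul, mul_one]

theorem addOrderOf_mk_eq {M : Type*} [AddCommGroup M] {p : Submodule ℤ M}
    {e : M} {n : ℕ} (f : M →ₗ[ℤ] ℤ) (hn : n • e ∈ p) (hp : ∀ v ∈ p, (n : ℤ) ∣ f v)
    (he : f e = 1) : addOrderOf (mk e : M ⧸ p) = n := by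
  refine Nat.dvd_antisymm (addOrderOf_dvd_of_nsmul_eq_zero ?_) ?_
  · rwa [← mk_smul, mk_eq_zero]
  · have hk : addOrderOf (mk e : M ⧸ p) • e ∈ p := by
      rw [← mk_eq_zero, mk_smul]
      exact addOrderOf_nsmul_eq_zero _
    have := hp _ hk
    rwa [map_nsmul, he, nsmul_one, Int.natCast_dvd_natCast] at this

end Submodule.Quotient

def intersectionMatrix (q : ℕ) : Matrix (Fin q) (Fin q) ℤ := Matrix.of fun i j =>
  if i = j then (if i.val = 0 ∨ i.val = q - 1 then (q : ℤ) + 2 else 2)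
  else if i.val + 1 = j.val ∨ j.val + 1 = i.val then -1 else 0

def psiCoeff (q : ℕ) (n : ℤ) : ℤ := 1 + n * (q + 1)

section IntersectionMatrix

variable {q : ℕ}

theorem intersectionMatrix_isSymm : (intersectionMatrix q).IsSymm := by
  ext i j
  simp only [transpose_apply, intersectionMatrix, of_apply, eq_comm (a := i), or_comm]
  split_ifs <;> simp_all

theorem intersectionMatrix_apply_eq_diag_sub (i j : Fin q) : intersectionMatrix q i j =
    (if j = i then (if i.val = 0 ∨ i.val = q - 1 then (q : ℤ) + 2 else 2) else 0)
      - (if j.val = i.val + 1 then 1 else 0)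
      - (if i.val ≠ 0 then (if j.val = i.val - 1 then 1 else 0) else 0) := by
  simp only [intersectionMatrix, of_apply, eq_comm (a := i)]
  split_ifs <;> simp_all [Fin.ext_iff] <;> omega

theorem intersectionMatrix_mulVec_apply (c : ℤ → ℤ) (i : Fin q) :
    (intersectionMatrix q *ᵥ fun j => c j) i =
      (if i.val = 0 ∨ i.val = q - 1 then (q : ℤ) + 2 else 2) * c i
        - (if i.val + 1 < q then c (i + 1) else 0) - (if i.val ≠ 0 then c (i - 1) else 0) := by
  simp only [mulVec, dotProduct, intersectionMatrix_apply_eq_diag_sub, sub_mul, ite_mul,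
    zero_mul, one_mul, Finset.sum_sub_distrib, Finset.sum_ite_eq', Finset.mem_univ, if_true]
  rw [Fin.sum_univ_eq_sum_range (fun n => if n = i.val + 1 then c n else 0),
    Fin.sum_univ_eq_sum_range
      (fun n => if i.val ≠ 0 then if n = i.val - 1 then c n else 0 else 0)]
  have hpred : i.val - 1 < q := (Nat.sub_le _ _).trans_lt i.isLt
  simp only [Finset.sum_ite_irrel, Finset.sum_ite_eq', Finset.mem_range, hpred, if_true,
    Finset.sum_const_zero]
  push_cast
  congr 1
  split_ifs with h
  · rw [Nat.cast_pred (Nat.pos_of_ne_zero h)]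
  · rfl

theorem intersectionMatrix_mulVec_psiCoeff (hq : 1 < q) :
    intersectionMatrix q *ᵥ (fun j => psiCoeff q j) =
      (((q : ℤ) ^ 2 + 1) * (q + 1)) • Pi.single ⟨q - 1, by omega⟩ 1 := by
  funext i
  rw [intersectionMatrix_mulVec_apply]
  simp only [Pi.single_apply, Fin.ext_iff, Pi.smul_apply, smul_eq_mul, psiCoeff]
  split_ifs <;> grind

theorem intersectionMatrix_mulVec_psiCoeff_reflect (hq : 1 < q) :
    intersectionMatrix q *ᵥ (fun j => psiCoeff q (q - 1 - j)) =
      ((q ^ 2 + 1) * (q + 1)) • Pi.single ⟨0, by omega⟩ 1 := by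
  funext i
  rw [intersectionMatrix_mulVec_apply (fun n => psiCoeff q (q - 1 - n))]
  simp only [Pi.single_apply, Fin.ext_iff, Pi.smul_apply, nsmul_eq_mul, psiCoeff]
  push_cast
  split_ifs <;> grind

theorem intersectionMatrix_mulVec_min_sub (hq : 1 < q) (j : Fin q) :
    intersectionMatrix q *ᵥ (fun i => min (i : ℤ) j - j) =
      Pi.single j 1 - psiCoeff q j • Pi.single ⟨0, by omega⟩ 1 := by
  funext i
  rw [intersectionMatrix_mulVec_apply (fun n => min n j - j)]
  simp only [Pi.single_apply, Fin.ext_iff, Pi.sub_apply, Pi.smul_apply, smul_eq_mul, psiCoeff]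
  split_ifs <;> grind

theorem dvd_psiCoeff_dotProduct_intersectionMatrix_mulVec (hq : 1 < q) (u : Fin q → ℤ) :
    (((q ^ 2 + 1) * (q + 1) : ℕ) : ℤ) ∣
      (fun j : Fin q => psiCoeff q j) ⬝ᵥ (intersectionMatrix q *ᵥ u) := by
  rw [dotProduct_mulVec, ← mulVec_transpose, intersectionMatrix_isSymm,
    intersectionMatrix_mulVec_psiCoeff hq, smul_dotProduct, smul_eq_mul]
  push_cast
  exact dvd_mul_right _ _

theorem mk_single_eq_psiCoeff_smul (hq : 1 < q) (j : Fin q) :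
    (Submodule.Quotient.mk (Pi.single j 1) :
        (Fin q → ℤ) ⧸ LinearMap.range (intersectionMatrix q).mulVecLin) =
      psiCoeff q j • Submodule.Quotient.mk (Pi.single ⟨0, by omega⟩ 1) := by
  rw [← Submodule.Quotient.mk_smul, Submodule.Quotient.eq]
  exact ⟨_, intersectionMatrix_mulVec_min_sub hq j⟩

end IntersectionMatrix

/-- The free abelian group on `ψ₁,…,ψ_q` modulo the relations given by the rows of
the intersection matrix `M` (with `M₁₁ = M_qq = q+2`, `Mᵢᵢ = 2` otherwise,
`M_{i,i+1} = M_{i+1,i} = -1`) is cyclic of order `(q²+1)(q+1)`, generated by the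
image of `ψ₁`. -/
theorem stmt_5 (q : ℕ) (hq : 2 ≤ q)
    (M : Matrix (Fin q) (Fin q) ℤ)
    (hM : ∀ i j : Fin q, M i j =
      if i = j then (if i.val = 0 ∨ i.val = q - 1 then (q : ℤ) + 2 else 2)
      else if i.val + 1 = j.val ∨ j.val + 1 = i.val then -1 else 0) :
    addOrderOf (Submodule.Quotient.mk (Pi.single (⟨0, by omega⟩ : Fin q) (1 : ℤ)) :
        (Fin q → ℤ) ⧸ LinearMap.range M.mulVecLin) = (q ^ 2 + 1) * (q + 1) ∧
    ∀ x : (Fin q → ℤ) ⧸ LinearMap.range M.mulVecLin,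
      x ∈ AddSubgroup.zmultiples
        (Submodule.Quotient.mk (Pi.single (⟨0, by omega⟩ : Fin q) (1 : ℤ))) := by
  obtain rfl : M = intersectionMatrix q := Matrix.ext hM
  refine ⟨?_, fun x => ?_⟩
  · refine Submodule.Quotient.addOrderOf_mk_eq (dotProductEquiv ℤ (Fin q) (psiCoeff q ·))
      ⟨_, intersectionMatrix_mulVec_psiCoeff_reflect (by omega)⟩ ?_ (by simp [psiCoeff])
    rintro _ ⟨u, rfl⟩
    exact dvd_psiCoeff_dotProduct_intersectionMatrix_mulVec (by omega) u
  · obtain ⟨y, rfl⟩ := Submodule.Quotient.mk_surjective _ x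
    have hgen := mk_single_eq_psiCoeff_smul (q := q) (by omega)
    exact AddSubgroup.mem_zmultiples_iff.2
      ⟨_, (Submodule.Quotient.mk_eq_dotProduct_smul hgen y).symm⟩
end
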